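/- For the nilpotent Lie algebras in Family (Ni), with structure equations dphi^1 = dphi^2 = 0, dphi^3 = rho phi^{12} + phi^{1 1bar} + lambda phi^{1 2bar} + D phi^{2 2bar}, where rho in {0,1}, lambda >= 0 is real, D in C with Im D >= 0, and with a balanced Hermitian metric, i.e. 2 omega = i (phi^{1 1bar} + s^2 phi^{2 2bar} + t^2 phi^{3 3bar}) + u phi^{1 2bar} - conj(u) phi^{2 1bar} with s^2 > |u|^2, t^2 > 0, and satisfying the balanced constraint s^2 + D = i conj(u) lambda: the Levi-Civita connection nabla^{LC} is never Kähler-like. -/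

import Mathlib

noncomputable section

open Complex

abbrev V6 : Type := Fin 6 → ℂ

/-- Conjugation on the complexified Lie algebra: swaps the holomorphic and
antiholomorphic coordinates and conjugates. -/
def sigma6 (x : V6) : V6 :=
  ![starRingEnd ℂ (x 3), starRingEnd ℂ (x 4), starRingEnd ℂ (x 5),
    starRingEnd ℂ (x 0), starRingEnd ℂ (x 1), starRingEnd ℂ (x 2)]

/-- The complex structure `J`: multiplication by `i` on `X₁,X₂,X₃` and by `-i`
on their conjugates. -/
def Jmap (x : V6) : V6 :=
  ![I * x 0, I * x 1, I * x 2, -(I * x 3), -(I * x 4), -(I * x 5)]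

/-- `wdg a b = φ^a ∧ φ^b` evaluated on a pair of vectors. -/
def wdg (a b : Fin 6) (x y : V6) : ℂ := x a * y b - x b * y a

/-- The Lie bracket determined by `d φ^k = dk` via `dα(x,y) = -α([x,y])`,
extended by reality to the antiholomorphic coframe. -/
def mkBk (d1 d2 d3 : V6 → V6 → ℂ) (x y : V6) : V6 :=
  ![-(d1 x y), -(d2 x y), -(d3 x y),
    -(starRingEnd ℂ (d1 (sigma6 x) (sigma6 y))),
    -(starRingEnd ℂ (d2 (sigma6 x) (sigma6 y))),
    -(starRingEnd ℂ (d3 (sigma6 x) (sigma6 y)))]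

/-- The (complex-bilinearly extended) Hermitian metric with fundamental form
`2ω = i r² φ^{11̄} + i s² φ^{22̄} + i t² φ^{33̄} + u φ^{12̄} - ū φ^{21̄}
  + v φ^{23̄} - v̄ φ^{32̄} + z φ^{13̄} - z̄ φ^{31̄}`, via `ω(x,y) = g(Jx,y)`. -/
def gm (r s t : ℝ) (u v z : ℂ) (x y : V6) : ℂ :=
  (r ^ 2 : ℂ) / 2 * (x 0 * y 3 + x 3 * y 0)
  + (s ^ 2 : ℂ) / 2 * (x 1 * y 4 + x 4 * y 1)
  + (t ^ 2 : ℂ) / 2 * (x 2 * y 5 + x 5 * y 2)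
  + (-(I * u) / 2) * (x 0 * y 4 + x 4 * y 0)
  + ((I * starRingEnd ℂ u) / 2) * (x 1 * y 3 + x 3 * y 1)
  + (-(I * z) / 2) * (x 0 * y 5 + x 5 * y 0)
  + ((I * starRingEnd ℂ z) / 2) * (x 2 * y 3 + x 3 * y 2)
  + (-(I * v) / 2) * (x 1 * y 5 + x 5 * y 1)
  + ((I * starRingEnd ℂ v) / 2) * (x 2 * y 4 + x 4 * y 2)

/-- Admissibility (positive definiteness) of the metric parameters. -/
def Adm (r s t : ℝ) (u v z : ℂ) : Prop :=
  0 < r ^ 2 ∧ 0 < s ^ 2 ∧ 0 < t ^ 2 ∧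
  ‖u‖ ^ 2 < r ^ 2 * s ^ 2 ∧
  ‖z‖ ^ 2 < r ^ 2 * t ^ 2 ∧
  ‖v‖ ^ 2 < s ^ 2 * t ^ 2 ∧
  t ^ 2 * ‖u‖ ^ 2 + r ^ 2 * ‖v‖ ^ 2 + s ^ 2 * ‖z‖ ^ 2
    < r ^ 2 * s ^ 2 * t ^ 2 + 2 * (I * starRingEnd ℂ u * z * starRingEnd ℂ v).re

/-- `dω` for the invariant 2-form `ω(x,y) = g(Jx,y)`:
`dω(x,y,w) = -ω([x,y],w) + ω([x,w],y) - ω([y,w],x)`. -/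
def dOm (bkf : V6 → V6 → V6) (gf : V6 → V6 → ℂ) (x y w : V6) : ℂ :=
  -(gf (Jmap (bkf x y)) w) + gf (Jmap (bkf x w)) y - gf (Jmap (bkf y w)) x

/-- `T = -dω(J·,J·,J·)`. -/
def Tt (bkf : V6 → V6 → V6) (gf : V6 → V6 → ℂ) (x y w : V6) : ℂ :=
  -(dOm bkf gf (Jmap x) (Jmap y) (Jmap w))

/-- `C = dω(J·,·,·)`. -/
def Ct (bkf : V6 → V6 → V6) (gf : V6 → V6 → ℂ) (x y w : V6) : ℂ :=
  dOm bkf gf (Jmap x) y w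

/-- The curvature 4-tensor of a connection `nab`. -/
def curv (bkf : V6 → V6 → V6) (gf : V6 → V6 → ℂ) (nab : V6 → V6 → V6)
    (x y z w : V6) : ℂ :=
  gf (nab x (nab y z) - nab y (nab x z) - nab (bkf x y) z) w

/-- `nlc` is the Levi-Civita connection:
`2 g(∇ˡᶜ_x y, w) = g([x,y],w) - g([y,w],x) - g([x,w],y)`. -/
def IsLC (bkf : V6 → V6 → V6) (gf : V6 → V6 → ℂ) (nlc : V6 → V6 → V6) : Prop :=
  ∀ x y w, 2 * gf (nlc x y) w = gf (bkf x y) w - gf (bkf y w) x - gf (bkf x w) y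

/-- `nab` is the Gauduchon connection `∇^ε`:
`g(∇^ε_x y, w) = g(∇ˡᶜ_x y, w) + ε T(x,y,w) + (1/2 - ε) C(x,y,w)`. -/
def IsGauduchon (bkf : V6 → V6 → V6) (gf : V6 → V6 → ℂ) (eps : ℝ)
    (nlc nab : V6 → V6 → V6) : Prop :=
  IsLC bkf gf nlc ∧
  ∀ x y w, gf (nab x y) w =
    gf (nlc x y) w + (eps : ℂ) * Tt bkf gf x y w + ((1 / 2 : ℂ) - (eps : ℂ)) * Ct bkf gf x y w

/-- A curvature tensor is Kähler-like if it satisfies the first Bianchi identity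
and the type condition. -/
def KahlerLike (R : V6 → V6 → V6 → V6 → ℂ) : Prop :=
  (∀ x y z w, R x y z w + R y z x w + R z x y w = 0) ∧
  (∀ x y z w, R x y z w = R x y (Jmap z) (Jmap w) ∧ R x y z w = R (Jmap x) (Jmap y) z w)

/-- The basis vectors `X₁,X₂,X₃,X̄₁,X̄₂,X̄₃`. -/
def ee (k : Fin 6) : V6 := fun j => if j = k then 1 else 0

/-- Bracket for Family (Ni):
`dφ¹ = dφ² = 0`, `dφ³ = ρ φ^{12} + φ^{11̄} + λ φ^{12̄} + D φ^{22̄}`. -/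
def bkNi (rho lam : ℝ) (D : ℂ) : V6 → V6 → V6 :=
  mkBk (fun _ _ => 0) (fun _ _ => 0)
    (fun x y => (rho : ℂ) * wdg 0 1 x y + wdg 0 3 x y + (lam : ℂ) * wdg 0 4 x y
      + D * wdg 1 4 x y)

/-!
The type condition alone kills `R(X₁, X₂, X̄₁, X̄₂)`: `J` acts by `-i` on both `X̄₁` and `X̄₂`,
and `∇ˡᶜ` is linear in its second slot, so `R(x, y, Jz, Jw) = (-i)² R(x, y, z, w)`.
On the other hand the Koszul formula gives `∇_{X₂} X̄₁ = (λ/2) X̄₃` and `∇_{X₁} X̄₁ = (X̄₃ - X₃)/2`,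
whence `R(X₁, X₂, X̄₁, X̄₂) = t² (λ² + 2ρ² - 2 Re D) / 8`. The balanced condition gives
`Re D = λ Im u - s²`, and `(Im u)² ≤ |u|² < s²` makes this positive.
-/

section
variable {r s t : ℝ} {u v z : ℂ}

lemma gm_smul_left (c : ℂ) (x y : V6) : gm r s t u v z (c • x) y = c * gm r s t u v z x y := by
  simp only [gm, Pi.smul_apply, smul_eq_mul]; ring

lemma gm_smul_right (c : ℂ) (x y : V6) : gm r s t u v z x (c • y) = c * gm r s t u v z x y := by
  simp only [gm, Pi.smul_apply, smul_eq_mul]; ring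

lemma gm_sub_left (x y w : V6) :
    gm r s t u v z (x - y) w = gm r s t u v z x w - gm r s t u v z y w := by
  simp only [gm, Pi.sub_apply]; ring

end

section
variable {rho lam : ℝ} {D : ℂ}

lemma bkNi_smul_left (c : ℂ) (x y : V6) : bkNi rho lam D (c • x) y = c • bkNi rho lam D x y := by
  ext k; fin_cases k <;> simp [bkNi, mkBk, wdg, sigma6] <;> ring

lemma bkNi_smul_right (c : ℂ) (x y : V6) : bkNi rho lam D x (c • y) = c • bkNi rho lam D x y := by
  ext k; fin_cases k <;> simp [bkNi, mkBk, wdg, sigma6] <;> ring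

end

lemma Jmap_ee_three : Jmap (ee 3) = (-I) • ee 3 := by
  ext k; fin_cases k <;> simp [Jmap, ee]

lemma Jmap_ee_four : Jmap (ee 4) = (-I) • ee 4 := by
  ext k; fin_cases k <;> simp [Jmap, ee]

lemma gm_eq_zero_of_forall_ee {s t : ℝ} {u : ℂ} (hs : ‖u‖ ^ 2 < s ^ 2) (ht : 0 < t ^ 2) {d : V6}
    (h : ∀ k, gm 1 s t u 0 0 d (ee k) = 0) : d = 0 := by
  have hsu : (s : ℂ) ^ 2 - u * starRingEnd ℂ u ≠ 0 := by
    rw [mul_conj, normSq_eq_norm_sq]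
    exact_mod_cast (sub_pos.mpr hs).ne'
  have ht0 : t ≠ 0 := by rintro rfl; simp at ht
  have h0 := h 0; have h1 := h 1; have h2 := h 2
  have h3 := h 3; have h4 := h 4; have h5 := h 5
  simp [gm, ee] at h0 h1 h2 h3 h4 h5
  ext k
  fin_cases k <;> simp only [Pi.zero_apply, Fin.zero_eta, Fin.mk_one, Fin.reduceFinMk]
  · refine mul_left_cancel₀ hsu ?_
    linear_combination 2 * (s : ℂ) ^ 2 * h3 - 2 * I * starRingEnd ℂ u * h4
      - u * starRingEnd ℂ u * d 0 * I_mul_I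
  · refine mul_left_cancel₀ hsu ?_
    linear_combination 2 * I * u * h3 + 2 * h4 - u * starRingEnd ℂ u * d 1 * I_mul_I
  · exact h5.resolve_left ht0
  · refine mul_left_cancel₀ hsu ?_
    linear_combination 2 * (s : ℂ) ^ 2 * h0 + 2 * I * u * h1 - u * starRingEnd ℂ u * d 3 * I_mul_I
  · refine mul_left_cancel₀ hsu ?_
    linear_combination -2 * I * starRingEnd ℂ u * h0 + 2 * h1 - u * starRingEnd ℂ u * d 4 * I_mul_I
  · exact h2.resolve_left ht0

lemma gm_injective {s t : ℝ} {u : ℂ} (hs : ‖u‖ ^ 2 < s ^ 2) (ht : 0 < t ^ 2) :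
    Function.Injective (gm 1 s t u 0 0) := fun p q hpq =>
  sub_eq_zero.mp <| gm_eq_zero_of_forall_ee hs ht fun k => by rw [gm_sub_left, hpq, sub_self]

lemma IsLC.koszul {bkf : V6 → V6 → V6} {gf : V6 → V6 → ℂ} {nlc : V6 → V6 → V6}
    (hlc : IsLC bkf gf nlc) (x y w : V6) :
    gf (nlc x y) w = (gf (bkf x y) w - gf (bkf y w) x - gf (bkf x w) y) / 2 := by
  rw [← hlc]; ring

section LeviCivita
variable {rho lam : ℝ} {D : ℂ} {s t : ℝ} {u : ℂ} {nlc : V6 → V6 → V6}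

lemma IsLC.eq_of_koszul (hs : ‖u‖ ^ 2 < s ^ 2) (ht : 0 < t ^ 2)
    (hlc : IsLC (bkNi rho lam D) (gm 1 s t u 0 0) nlc) {x y v : V6}
    (hv : ∀ w, gm 1 s t u 0 0 v w = (gm 1 s t u 0 0 (bkNi rho lam D x y) w
      - gm 1 s t u 0 0 (bkNi rho lam D y w) x - gm 1 s t u 0 0 (bkNi rho lam D x w) y) / 2) :
    nlc x y = v :=
  gm_injective hs ht <| funext fun w => (hlc.koszul x y w).trans (hv w).symm

lemma IsLC.smul_right (hs : ‖u‖ ^ 2 < s ^ 2) (ht : 0 < t ^ 2)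
    (hlc : IsLC (bkNi rho lam D) (gm 1 s t u 0 0) nlc) (x y : V6) (c : ℂ) :
    nlc x (c • y) = c • nlc x y := by
  refine hlc.eq_of_koszul hs ht fun w => ?_
  rw [gm_smul_left, hlc.koszul, bkNi_smul_right, bkNi_smul_left, gm_smul_left, gm_smul_left,
    gm_smul_right]
  ring

lemma curv_smul_smul (hs : ‖u‖ ^ 2 < s ^ 2) (ht : 0 < t ^ 2)
    (hlc : IsLC (bkNi rho lam D) (gm 1 s t u 0 0) nlc) (x y z w : V6) (a b : ℂ) :
    curv (bkNi rho lam D) (gm 1 s t u 0 0) nlc x y (a • z) (b • w)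
      = a * b * curv (bkNi rho lam D) (gm 1 s t u 0 0) nlc x y z w := by
  simp only [curv, hlc.smul_right hs ht, ← smul_sub, gm_smul_left, gm_smul_right]
  ring

lemma curv_antiholomorphic_eq_zero (hs : ‖u‖ ^ 2 < s ^ 2) (ht : 0 < t ^ 2)
    (hlc : IsLC (bkNi rho lam D) (gm 1 s t u 0 0) nlc)
    (hK : KahlerLike (curv (bkNi rho lam D) (gm 1 s t u 0 0) nlc))
    {x y z w : V6} (hz : Jmap z = (-I) • z) (hw : Jmap w = (-I) • w) :
    curv (bkNi rho lam D) (gm 1 s t u 0 0) nlc x y z w = 0 := by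
  have h := (hK.2 x y z w).1
  rw [hz, hw, curv_smul_smul hs ht hlc] at h
  linear_combination h / 2 + curv (bkNi rho lam D) (gm 1 s t u 0 0) nlc x y z w / 2 * I_mul_I

lemma curv_ee_zero_one_three_four (hs : ‖u‖ ^ 2 < s ^ 2) (ht : 0 < t ^ 2)
    (hlc : IsLC (bkNi rho lam D) (gm 1 s t u 0 0) nlc) :
    curv (bkNi rho lam D) (gm 1 s t u 0 0) nlc (ee 0) (ee 1) (ee 3) (ee 4)
      = ((t ^ 2 * (lam ^ 2 + 2 * rho ^ 2 - 2 * D.re) / 8 : ℝ) : ℂ) := by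
  have h13 : nlc (ee 1) (ee 3) = ![0, 0, 0, 0, 0, (lam : ℂ) / 2] :=
    hlc.eq_of_koszul hs ht fun w => by simp [gm, bkNi, mkBk, wdg, sigma6, ee]; ring
  have h03 : nlc (ee 0) (ee 3) = ![0, 0, -1 / 2, 0, 0, 1 / 2] :=
    hlc.eq_of_koszul hs ht fun w => by simp [gm, bkNi, mkBk, wdg, sigma6, ee]; ring
  rw [curv, h13, h03, gm_sub_left, gm_sub_left, hlc.koszul, hlc.koszul, hlc.koszul]
  simp [gm, bkNi, mkBk, wdg, sigma6, ee]
  have hre : D + starRingEnd ℂ D = 2 * (D.re : ℂ) := by exact_mod_cast add_conj D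
  linear_combination -(t : ℂ) ^ 2 / 8 * hre

end LeviCivita

lemma re_eq_of_balanced {lam s : ℝ} {D u : ℂ}
    (hbal : (s ^ 2 : ℂ) + D = I * starRingEnd ℂ u * (lam : ℂ)) : D.re = lam * u.im - s ^ 2 := by
  have h := congrArg re hbal
  simp [← ofReal_pow] at h
  linarith

lemma sq_add_two_sq_sub_two_re_pos_of_balanced {rho lam s : ℝ} {D u : ℂ} (hs : ‖u‖ ^ 2 < s ^ 2)
    (hbal : (s ^ 2 : ℂ) + D = I * starRingEnd ℂ u * (lam : ℂ)) :
    0 < lam ^ 2 + 2 * rho ^ 2 - 2 * D.re := by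
  have him : u.im ^ 2 ≤ ‖u‖ ^ 2 := by
    rw [← normSq_eq_norm_sq, normSq_apply]; nlinarith [sq_nonneg u.re]
  rw [re_eq_of_balanced hbal]
  nlinarith [sq_nonneg (lam - u.im), sq_nonneg rho]

theorem statement6_general (rho lam : ℝ) (D : ℂ)
    (s t : ℝ) (u : ℂ) (hs : ‖u‖ ^ 2 < s ^ 2) (ht : 0 < t ^ 2)
    (hbal : (s ^ 2 : ℂ) + D = Complex.I * starRingEnd ℂ u * (lam : ℂ))
    (nlc : V6 → V6 → V6)
    (hlc : IsLC (bkNi rho lam D) (gm 1 s t u 0 0) nlc) :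
    ¬ KahlerLike (curv (bkNi rho lam D) (gm 1 s t u 0 0) nlc) := by
  intro hK
  have hzero := curv_antiholomorphic_eq_zero hs ht hlc hK (x := ee 0) (y := ee 1)
    Jmap_ee_three Jmap_ee_four
  rw [curv_ee_zero_one_three_four hs ht hlc, ofReal_eq_zero] at hzero
  have hpos := mul_pos ht (sq_add_two_sq_sub_two_re_pos_of_balanced (rho := rho) hs hbal)
  linarith

/-- Family (Ni) with a balanced metric (`s² + D = i ū λ`): the Levi-Civita
connection is never Kähler-like. -/
theorem statement6 (rho lam : ℝ) (D : ℂ) (hrho : rho = 0 ∨ rho = 1)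
    (hlam : 0 ≤ lam) (hD : 0 ≤ D.im)
    (s t : ℝ) (u : ℂ) (hs : ‖u‖ ^ 2 < s ^ 2) (ht : 0 < t ^ 2)
    (hbal : (s ^ 2 : ℂ) + D = Complex.I * starRingEnd ℂ u * (lam : ℂ))
    (nlc : V6 → V6 → V6)
    (hlc : IsLC (bkNi rho lam D) (gm 1 s t u 0 0) nlc) :
    ¬ KahlerLike (curv (bkNi rho lam D) (gm 1 s t u 0 0) nlc) :=
  statement6_general rho lam D s t u hs ht hbal nlc hlc
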